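/- arXiv:1409.1614 — 3 statements merged into one kernel-verified Lean document; each statement's English description precedes it below -/
import Mathlib

section
/- Let S be a finite nonempty set of positive integers with |S| = n. Then the number of cycle-free S-maps is exactly (n+1)^{n−1}. -/
/-!
A cycle-free map `S → S ∪ R`, with `R` disjoint from `S`, is determined by the set `T ⊆ S` of
points it sends into `R`, its restriction `T → R`, and a cycle-free map `S \ T → (S \ T) ∪ T`.
When `S` is nonempty, `T` is nonempty too, because a self-map of a nonempty finite set has a
cycle. So the number `F(s, k)` of such maps (`s = |S|`, `k = |R|`) satisfies
`F(s, k) = ∑_{T ⊆ S} k^|T| F(s - |T|, |T|)`, and by induction on `s` it equals the generalised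
Cayley number `k (s + k)^(s - 1)` for `s > 0`. The theorem is the case `R = {0}`.
-/

/-- A cycle of a map `f` relative to a set `S`: a sequence `a 0, …, a (k-1)` of
elements of `S` with `f (a i) = a (i+1)` for `i < k - 1` and `f (a (k-1)) = a 0`. -/
def HasCycle (S : Finset ℕ) (f : ℕ → ℕ) : Prop :=
  ∃ (k : ℕ) (a : ℕ → ℕ), 0 < k ∧ (∀ i < k, a i ∈ S) ∧
    (∀ i, i + 1 < k → f (a i) = a (i + 1)) ∧ f (a (k - 1)) = a 0

open Finset
open scoped Classical

theorem HasCycle.mono {S S' : Finset ℕ} {f : ℕ → ℕ} (h : HasCycle S f) (hSS' : S ⊆ S') :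
    HasCycle S' f := by
  obtain ⟨k, a, hk, ha, hstep, hlast⟩ := h
  exact ⟨k, a, hk, fun i hi => hSS' (ha i hi), hstep, hlast⟩

theorem HasCycle.congr {S : Finset ℕ} {f g : ℕ → ℕ} (h : HasCycle S f)
    (hfg : ∀ x ∈ S, f x = g x) : HasCycle S g := by
  obtain ⟨k, a, hk, ha, hstep, hlast⟩ := h
  refine ⟨k, a, hk, ha, fun i hi => ?_, ?_⟩
  · rw [← hfg _ (ha i (by omega)), hstep i hi]
  · rw [← hfg _ (ha _ (by omega)), hlast]

theorem hasCycle_congr {S : Finset ℕ} {f g : ℕ → ℕ} (hfg : ∀ x ∈ S, f x = g x) :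
    HasCycle S f ↔ HasCycle S g :=
  ⟨fun h => h.congr hfg, fun h => h.congr fun x hx => (hfg x hx).symm⟩

theorem HasCycle.sdiff {S T : Finset ℕ} {f : ℕ → ℕ} (h : HasCycle S f)
    (hT : ∀ x ∈ T, f x ∉ S) : HasCycle (S \ T) f := by
  obtain ⟨k, a, hk, ha, hstep, hlast⟩ := h
  have hmaps : ∀ i < k, f (a i) ∈ S := by
    intro i hi
    by_cases hnext : i + 1 < k
    · rw [hstep i hnext]; exact ha _ hnext
    · obtain rfl : i = k - 1 := by omega
      rw [hlast]; exact ha 0 hk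
  exact ⟨k, a, hk, fun i hi => mem_sdiff.2 ⟨ha i hi, fun hiT => hT _ hiT (hmaps i hi)⟩,
    hstep, hlast⟩

theorem hasCycle_of_mapsTo {S : Finset ℕ} {f : ℕ → ℕ} (hS : S.Nonempty)
    (hf : Set.MapsTo f S S) : HasCycle S f := by
  obtain ⟨x, hx⟩ := hS
  have horbit : ∀ m, f^[m] x ∈ S := fun m => hf.iterate m hx
  obtain ⟨i, j, hij, hfij⟩ :=
    S.finite_toSet.exists_lt_map_eq_of_forall_mem (f := fun m => f^[m] x) horbit
  refine ⟨j - i, fun t => f^[i + t] x, by omega, fun t _ => horbit _, fun t _ => ?_, ?_⟩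
  · rw [← Function.iterate_succ_apply' f]; rfl
  · rw [← Function.iterate_succ_apply' f, show (i + (j - i - 1)).succ = j by omega]
    exact hfij.symm

noncomputable def mapsInto (S V : Finset ℕ) : Finset (ℕ → ℕ) :=
  (S.pi fun _ => V).image fun p i => if h : i ∈ S then p i h else 0

theorem mem_mapsInto {S V : Finset ℕ} {g : ℕ → ℕ} :
    g ∈ mapsInto S V ↔ (∀ i ∈ S, g i ∈ V) ∧ ∀ i ∉ S, g i = 0 := by
  constructor
  · rw [mapsInto, mem_image]
    rintro ⟨p, hp, rfl⟩
    rw [mem_pi] at hp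
    exact ⟨fun i hi => by simpa [hi] using hp i hi, fun i hi => by simp [hi]⟩
  · rintro ⟨hV, hzero⟩
    refine mem_image.2 ⟨fun i _ => g i, mem_pi.2 hV, funext fun i => ?_⟩
    split_ifs with hi
    · rfl
    · exact (hzero i hi).symm

theorem card_mapsInto (S V : Finset ℕ) : #(mapsInto S V) = #V ^ #S := by
  rw [mapsInto, card_image_of_injOn, card_pi, prod_const]
  intro p _ q _ hpq
  funext i hi
  simpa [hi] using congrFun hpq i

theorem piecewise_zero_mem_mapsInto {T R : Finset ℕ} {g : ℕ → ℕ} (hg : ∀ i ∈ T, g i ∈ R) :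
    T.piecewise g 0 ∈ mapsInto T R :=
  mem_mapsInto.2 ⟨fun i hi => by rw [piecewise_eq_of_mem _ _ _ hi]; exact hg i hi,
    fun i hi => piecewise_eq_of_notMem _ _ _ hi⟩

noncomputable def cycleFreeMaps (S R : Finset ℕ) : Finset (ℕ → ℕ) :=
  {g ∈ mapsInto S (S ∪ R) | ¬ HasCycle S g}

theorem mem_cycleFreeMaps {S R : Finset ℕ} {g : ℕ → ℕ} :
    g ∈ cycleFreeMaps S R ↔ (∀ i ∈ S, g i ∈ S ∪ R) ∧ (∀ i ∉ S, g i = 0) ∧ ¬ HasCycle S g := by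
  rw [cycleFreeMaps, mem_filter, mem_mapsInto, and_assoc]

theorem card_cycleFreeMaps_empty_left (R : Finset ℕ) : #(cycleFreeMaps ∅ R) = 1 := by
  rw [cycleFreeMaps, filter_true_of_mem, card_mapsInto, card_empty, pow_zero]
  rintro g - ⟨k, a, hk, ha, -⟩
  exact notMem_empty _ (ha 0 hk)

theorem cycleFreeMaps_empty_right {S : Finset ℕ} (hS : S.Nonempty) : cycleFreeMaps S ∅ = ∅ :=
  eq_empty_of_forall_notMem fun g hg => by
    obtain ⟨hmaps, -, hacyclic⟩ := mem_cycleFreeMaps.1 hg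
    exact hacyclic (hasCycle_of_mapsTo hS fun i hi => by simpa using hmaps i hi)

theorem piecewise_zero_mem_cycleFreeMaps_sdiff {S R T : Finset ℕ} {g : ℕ → ℕ} (hTS : T ⊆ S)
    (hg : g ∈ cycleFreeMaps S R) (hgR : ∀ i ∈ S \ T, g i ∉ R) :
    (S \ T).piecewise g 0 ∈ cycleFreeMaps (S \ T) T := by
  obtain ⟨hmaps, -, hacyclic⟩ := mem_cycleFreeMaps.1 hg
  refine mem_cycleFreeMaps.2 ⟨fun i hi => ?_, fun i hi => piecewise_eq_of_notMem _ _ _ hi,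
    fun hcycle => hacyclic ?_⟩
  · rw [piecewise_eq_of_mem _ _ _ hi, sdiff_union_of_subset hTS]
    exact (mem_union.1 (hmaps i (mem_sdiff.1 hi).1)).resolve_right (hgR i hi)
  · exact ((hasCycle_congr fun x hx => piecewise_eq_of_mem _ _ _ hx).1 hcycle).mono sdiff_subset

section Piecewise

variable {S R T : Finset ℕ} {p₁ p₂ : ℕ → ℕ}

theorem piecewise_mem_cycleFreeMaps (hSR : Disjoint S R) (hTS : T ⊆ S)
    (hp₁ : p₁ ∈ mapsInto T R) (hp₂ : p₂ ∈ cycleFreeMaps (S \ T) T) :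
    T.piecewise p₁ p₂ ∈ cycleFreeMaps S R := by
  obtain ⟨h₁maps, -⟩ := mem_mapsInto.1 hp₁
  obtain ⟨h₂maps, h₂zero, h₂acyclic⟩ := mem_cycleFreeMaps.1 hp₂
  rw [sdiff_union_of_subset hTS] at h₂maps
  have hoff : ∀ i ∈ S \ T, T.piecewise p₁ p₂ i = p₂ i := fun i hi =>
    piecewise_eq_of_notMem _ _ _ (mem_sdiff.1 hi).2
  refine mem_cycleFreeMaps.2 ⟨fun i hi => ?_, fun i hi => ?_, fun hcycle => ?_⟩
  · by_cases hiT : i ∈ T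
    · rw [piecewise_eq_of_mem _ _ _ hiT]; exact mem_union_right _ (h₁maps i hiT)
    · rw [hoff i (mem_sdiff.2 ⟨hi, hiT⟩)]
      exact mem_union_left _ (h₂maps i (mem_sdiff.2 ⟨hi, hiT⟩))
  · rw [piecewise_eq_of_notMem _ _ _ fun hiT => hi (hTS hiT),
      h₂zero i fun h => hi (mem_sdiff.1 h).1]
  · refine h₂acyclic ((hasCycle_congr hoff).1 (hcycle.sdiff fun x hx => ?_))
    rw [piecewise_eq_of_mem _ _ _ hx]
    exact disjoint_right.1 hSR (h₁maps x hx)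

theorem filter_piecewise_mem_eq (hSR : Disjoint S R) (hTS : T ⊆ S)
    (hp₁ : p₁ ∈ mapsInto T R) (hp₂ : p₂ ∈ cycleFreeMaps (S \ T) T) :
    {i ∈ S | T.piecewise p₁ p₂ i ∈ R} = T := by
  obtain ⟨h₁maps, -⟩ := mem_mapsInto.1 hp₁
  obtain ⟨h₂maps, -⟩ := mem_cycleFreeMaps.1 hp₂
  rw [sdiff_union_of_subset hTS] at h₂maps
  ext i
  rw [mem_filter]
  constructor
  · rintro ⟨hiS, hiR⟩
    by_contra hiT
    rw [piecewise_eq_of_notMem _ _ _ hiT] at hiR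
    exact disjoint_left.1 hSR (h₂maps i (mem_sdiff.2 ⟨hiS, hiT⟩)) hiR
  · intro hiT
    exact ⟨hTS hiT, by rw [piecewise_eq_of_mem _ _ _ hiT]; exact h₁maps i hiT⟩

end Piecewise

theorem card_filter_cycleFreeMaps_eq {S R T : Finset ℕ} (hSR : Disjoint S R) (hTS : T ⊆ S) :
    #{g ∈ cycleFreeMaps S R | {i ∈ S | g i ∈ R} = T} =
      #R ^ #T * #(cycleFreeMaps (S \ T) T) := by
  rw [← card_mapsInto T R, ← card_product]
  refine card_nbij' (fun g => (T.piecewise g 0, (S \ T).piecewise g 0))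
    (fun p => T.piecewise p.1 p.2) (fun g hg => ?_) (fun p hp => ?_) (fun g hg => ?_)
    (fun p hp => ?_)
  · obtain ⟨hg, hT⟩ := mem_filter.1 hg
    have hgR : ∀ i ∈ S, g i ∈ R ↔ i ∈ T := fun i hi => by simp [← hT, hi]
    exact mem_product.2 ⟨piecewise_zero_mem_mapsInto fun i hi => (hgR i (hTS hi)).2 hi,
      piecewise_zero_mem_cycleFreeMaps_sdiff hTS hg fun i hi hiR =>
        (mem_sdiff.1 hi).2 ((hgR i (mem_sdiff.1 hi).1).1 hiR)⟩
  · obtain ⟨hp₁, hp₂⟩ := mem_product.1 hp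
    exact mem_filter.2
      ⟨piecewise_mem_cycleFreeMaps hSR hTS hp₁ hp₂, filter_piecewise_mem_eq hSR hTS hp₁ hp₂⟩
  · have hzero := (mem_cycleFreeMaps.1 (mem_filter.1 hg).1).2.1
    funext i
    by_cases hiT : i ∈ T
    · simp [hiT]
    · by_cases hiS : i ∈ S
      · simp [hiT, hiS]
      · simp [hiT, hiS, hzero i hiS]
  · obtain ⟨hp₁, hp₂⟩ := mem_product.1 hp
    refine Prod.ext (funext fun i => ?_) (funext fun i => ?_)
    · by_cases hiT : i ∈ T
      · simp [hiT]
      · simp [hiT, (mem_mapsInto.1 hp₁).2 i hiT]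
    · by_cases hi : i ∈ S \ T
      · simp [hi, (mem_sdiff.1 hi).2]
      · simp [hi, (mem_cycleFreeMaps.1 hp₂).2.1 i hi]

theorem sum_range_mul_choose_mul_pow {R : Type*} [CommSemiring R] (x y : R) (n : ℕ) :
    ∑ m ∈ range (n + 1), (m * n.choose m : ℕ) * x ^ m * y ^ (n - m) =
      n * x * (x + y) ^ (n - 1) := by
  cases n with
  | zero => simp
  | succ t =>
    rw [sum_range_succ', Nat.add_sub_cancel, add_pow, mul_sum]
    simp only [zero_mul, Nat.cast_zero, add_zero]
    refine sum_congr rfl fun i _ => ?_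
    have hc : ((i + 1) * (t + 1).choose (i + 1) : ℕ) = (t + 1) * t.choose i := by
      rw [mul_comm, ← Nat.add_one_mul_choose_eq]
    rw [show t + 1 - (i + 1) = t - i by omega, hc]
    push_cast
    ring

/-- The number of forests on `s + k` labelled vertices whose roots are `k` given vertices. -/
def rootedForestCount (s k : ℕ) : ℕ :=
  if s = 0 then 1 else k * (s + k) ^ (s - 1)

theorem mul_rootedForestCount_sub {s m : ℕ} (hm : m ≤ s) :
    s * rootedForestCount (s - m) m = m * s ^ (s - m) := by
  unfold rootedForestCount
  split_ifs with h
  · rw [show m = s by omega, Nat.sub_self, pow_zero, mul_one]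
  · rw [Nat.sub_add_cancel hm, mul_left_comm, ← pow_succ', show s - m - 1 + 1 = s - m by omega]

theorem sum_range_choose_mul_rootedForestCount {s : ℕ} (hs : 0 < s) (k : ℕ) :
    ∑ m ∈ range (s + 1), s.choose m * (k ^ m * rootedForestCount (s - m) m) =
      rootedForestCount s k := by
  refine Nat.eq_of_mul_eq_mul_left hs ?_
  -- multiplied by `s`, all terms take the same shape and the sum becomes a derivative of
  -- the binomial theorem
  calc s * ∑ m ∈ range (s + 1), s.choose m * (k ^ m * rootedForestCount (s - m) m)
      = ∑ m ∈ range (s + 1), m * s.choose m * k ^ m * s ^ (s - m) := by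
        rw [mul_sum]
        refine sum_congr rfl fun m hm => ?_
        have h := mul_rootedForestCount_sub (Nat.lt_succ_iff.1 (mem_range.1 hm))
        calc _ = s.choose m * k ^ m * (s * rootedForestCount (s - m) m) := by ring
          _ = _ := by rw [h]; ring
    _ = s * (k * (k + s) ^ (s - 1)) := by
        simpa [mul_assoc] using sum_range_mul_choose_mul_pow k s s
    _ = s * rootedForestCount s k := by
        rw [rootedForestCount, if_neg hs.ne', add_comm k]

theorem card_cycleFreeMaps {S R : Finset ℕ} (hSR : Disjoint S R) :
    #(cycleFreeMaps S R) = rootedForestCount #S #R := by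
  induction S using Finset.strongInduction generalizing R with
  | H S ih =>
  rcases S.eq_empty_or_nonempty with rfl | hS
  · rw [card_cycleFreeMaps_empty_left, card_empty, rootedForestCount, if_pos rfl]
  have hfiber : ∀ T ∈ S.powerset, #{g ∈ cycleFreeMaps S R | {i ∈ S | g i ∈ R} = T} =
      #R ^ #T * rootedForestCount (#S - #T) #T := by
    intro T hT
    have hTS := mem_powerset.1 hT
    rw [card_filter_cycleFreeMaps_eq hSR hTS]
    rcases T.eq_empty_or_nonempty with rfl | hT
    · simp [cycleFreeMaps_empty_right hS, rootedForestCount, hS.ne_empty]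
    · rw [ih (S \ T) (sdiff_ssubset hTS hT) sdiff_disjoint, card_sdiff_of_subset hTS]
  calc #(cycleFreeMaps S R)
      = ∑ T ∈ S.powerset, #{g ∈ cycleFreeMaps S R | {i ∈ S | g i ∈ R} = T} :=
        card_eq_sum_card_fiberwise fun g _ => mem_powerset.2 (filter_subset _ _)
    _ = ∑ T ∈ S.powerset, #R ^ #T * rootedForestCount (#S - #T) #T := sum_congr rfl hfiber
    _ = ∑ m ∈ range (#S + 1), (#S).choose m * (#R ^ m * rootedForestCount (#S - m) m) :=
        sum_powerset_apply_card fun m => #R ^ m * rootedForestCount (#S - m) m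
    _ = rootedForestCount #S #R := sum_range_choose_mul_rootedForestCount (card_pos.2 hS) _

theorem card_cycleFree_maps_general
    (S : Finset ℕ) (hpos : ∀ i ∈ S, 0 < i)
    (n : ℕ) (hn : S.card = n) :
    {f : ℕ → ℕ | (∀ i ∈ S, f i ∈ S ∨ f i = 0) ∧ (∀ i ∉ S, f i = 0) ∧
      ¬ HasCycle S f}.ncard = (n + 1) ^ (n - 1) := by
  have hS0 : Disjoint S {0} := disjoint_singleton_right.2 fun h => (hpos 0 h).false
  have hset : {f : ℕ → ℕ | (∀ i ∈ S, f i ∈ S ∨ f i = 0) ∧ (∀ i ∉ S, f i = 0) ∧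
      ¬ HasCycle S f} = ↑(cycleFreeMaps S {0}) := by
    ext g
    simp [mem_cycleFreeMaps, or_comm]
  rw [hset, Set.ncard_coe_finset, card_cycleFreeMaps hS0, hn, rootedForestCount]
  split_ifs with h <;> simp [h]

/-- Let `S` be a finite nonempty set of positive integers with `|S| = n`.  The number
of cycle-free `S`-maps (functions `f : S → S ∪ {0}`, encoded as functions `ℕ → ℕ`
which vanish outside `S`) is exactly `(n + 1) ^ (n - 1)`. -/
theorem card_cycleFree_maps
    (S : Finset ℕ) (hS : S.Nonempty) (hpos : ∀ i ∈ S, 0 < i)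
    (n : ℕ) (hn : S.card = n) :
    {f : ℕ → ℕ | (∀ i ∈ S, f i ∈ S ∨ f i = 0) ∧ (∀ i ∉ S, f i = 0) ∧
      ¬ HasCycle S f}.ncard = (n + 1) ^ (n - 1) :=
  card_cycleFree_maps_general S hpos n hn
end

section
/- For n ≥ 2, the mapping that sends an [n−1]-map f to the multigraph on vertex set {0, 1, …, n−1} with an edge between i and f(i) for each i ∈ [n−1] restricts to a bijection between the set of cycle-free [n−1]-maps and the set of trees on the n vertices labeled 0, 1, …, n−1; the inverse sends a tree to the map associating each vertex i ≠ 0 with the second vertex on the unique path from i to 0. -/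
/-- The simple graph on vertex set `{0, 1, …, n-1}` obtained from an `[n-1]`-map `f`
by putting an edge between `i` and `f i` for each `i ∈ [n-1] = {1, …, n-1}`. -/
def mapGraph (n : ℕ) (f : ℕ → ℕ) : SimpleGraph (Fin n) where
  Adj a b := a ≠ b ∧ (((a : ℕ) ≠ 0 ∧ f a = (b : ℕ)) ∨ ((b : ℕ) ≠ 0 ∧ f b = (a : ℕ)))
  symm := by
    constructor
    rintro a b ⟨hab, h⟩
    exact ⟨hab.symm, h.symm⟩
  loopless := by
    constructor
    rintro a ⟨hab, -⟩
    exact hab rfl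

/-!
A cycle-free map `f` sends every `i` to `0` after finitely many steps (pigeonhole), so the
number of steps needed is a rank that strictly decreases along `f`. In a graph whose edges all
join a vertex to its parent of smaller rank, a path towards a vertex of no larger rank must
start with the parent edge. Hence every edge is a bridge, the graph is a tree, and the second
vertex on the path from `i` to `0` is `f i`, which also recovers `f` from its graph.
Conversely, in a tree rooted at `0` the parent map decreases the distance to `0`, so it is
cycle-free, and adjacent vertices are always parent and child.
-/

open SimpleGraph Function

lemma hasCycle_of_isPeriodicPt {S : Finset ℕ} {f : ℕ → ℕ} {k x : ℕ} (hk : 0 < k)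
    (hx : IsPeriodicPt f k x) (hS : ∀ m, f^[m] x ∈ S) : HasCycle S f := by
  refine ⟨k, fun j => f^[j] x, hk, fun j _ => hS j,
    fun j _ => (iterate_succ_apply' f j x).symm, ?_⟩
  show f (f^[k - 1] x) = x
  rw [← iterate_succ_apply' f, Nat.succ_eq_add_one, Nat.sub_add_cancel hk]
  exact hx

lemma exists_iterate_notMem_of_not_hasCycle {S : Finset ℕ} {f : ℕ → ℕ} (hf : ¬HasCycle S f)
    (x : ℕ) : ∃ m, f^[m] x ∉ S := by
  by_contra! hS
  obtain ⟨a, b, hab, he⟩ := Finite.exists_ne_map_eq_of_infinite fun m => (⟨f^[m] x, hS m⟩ : S)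
  wlog hlt : a < b generalizing a b
  · exact this b a hab.symm he.symm (by omega)
  refine hf (hasCycle_of_isPeriodicPt (k := b - a) (x := f^[a] x) (by omega) ?_ fun m => ?_)
  · rw [IsPeriodicPt, IsFixedPt, ← iterate_add_apply, Nat.sub_add_cancel hlt.le]
    exact (congrArg Subtype.val he).symm
  · rw [← iterate_add_apply]
    exact hS _

lemma not_hasCycle_of_rank {S : Finset ℕ} {f : ℕ → ℕ} (d : ℕ → ℕ)
    (hd : ∀ i ∈ S, d (f i) < d i) : ¬HasCycle S f := by
  rintro ⟨k, a, hk, haS, hstep, hloop⟩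
  have hdesc : ∀ j < k, d (a j) + j ≤ d (a 0) := by
    intro j
    induction j with
    | zero => simp
    | succ j ih =>
      intro hj
      have := hd _ (haS j (by omega))
      rw [hstep j hj] at this
      have := ih (by omega)
      omega
  have := hd _ (haS (k - 1) (by omega))
  rw [hloop] at this
  have := hdesc (k - 1) (by omega)
  omega

/-- Junk value `0` when the orbit of `x` never leaves `S`. -/
noncomputable def exitTime {α : Type*} (f : α → α) (S : Set α) (x : α) : ℕ :=
  sInf {m | f^[m] x ∉ S}

lemma exitTime_apply_lt {α : Type*} {f : α → α} {S : Set α} {x : α} (hx : x ∈ S)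
    (hexit : ∃ m, f^[m] x ∉ S) : exitTime f S (f x) < exitTime f S x := by
  have hmem : f^[exitTime f S x] x ∉ S := Nat.sInf_mem hexit
  have hpos : exitTime f S x ≠ 0 := by
    intro h
    rw [h] at hmem
    exact hmem hx
  have hle : exitTime f S (f x) ≤ exitTime f S x - 1 := by
    apply Nat.sInf_le
    show f^[exitTime f S x - 1] (f x) ∉ S
    rwa [← iterate_succ_apply, Nat.succ_eq_add_one, Nat.sub_add_cancel (by omega)]
  omega

lemma exitTime_eq_zero {α : Type*} {f : α → α} {S : Set α} {x : α} (hx : x ∉ S) :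
    exitTime f S x = 0 :=
  Nat.sInf_eq_zero.2 (.inl hx)

namespace SimpleGraph

variable {V : Type*}

def parentGraph (p : V → V) (r : V) : SimpleGraph V :=
  fromRel fun a b => a ≠ r ∧ p a = b

variable {p : V → V} {r : V} {d : V → ℕ}

lemma parentGraph_adj {a b : V} :
    (parentGraph p r).Adj a b ↔ a ≠ b ∧ ((a ≠ r ∧ p a = b) ∨ (b ≠ r ∧ p b = a)) :=
  fromRel_adj _ a b

section Rank

variable (hd : ∀ v, v ≠ r → d (p v) < d v)
include hd

lemma parentGraph_adj_apply {v : V} (hv : v ≠ r) : (parentGraph p r).Adj v (p v) :=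
  parentGraph_adj.2 ⟨fun h => (hd v hv).ne (congrArg d h).symm, Or.inl ⟨hv, rfl⟩⟩

lemma parentGraph_reachable_root (v : V) : (parentGraph p r).Reachable v r := by
  induction h : d v using Nat.strong_induction_on generalizing v with
  | _ k ih =>
    by_cases hv : v = r
    · subst hv
      exact Reachable.refl _
    · exact (parentGraph_adj_apply hd hv).reachable.trans (ih _ (h ▸ hd v hv) _ rfl)

/-- Were the first step from `v` to a child `u`, the rank of `u` would exceed that of the
endpoint, so by induction the path would continue with `p u = v`, revisiting `v`. -/
lemma Walk.snd_eq_of_isPath_of_le {G : SimpleGraph V} (hG : G ≤ parentGraph p r) {v w : V}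
    (q : G.Walk v w) (hq : q.IsPath) (hvw : v ≠ w) (hdw : d w ≤ d v) : q.snd = p v := by
  induction q with
  | nil => exact absurd rfl hvw
  | @cons v u w h q ih =>
    rw [Walk.snd_cons]
    rw [Walk.cons_isPath_iff] at hq
    obtain ⟨-, ⟨-, rfl⟩ | ⟨hu, rfl⟩⟩ := parentGraph_adj.1 (hG h)
    · rfl
    · have huw : u ≠ w := by
        rintro rfl
        exact absurd (hd u hu) (by omega)
      have := ih hq.1 huw (by have := hd u hu; omega)
      exact absurd (this ▸ q.getVert_mem_support 1) hq.2

lemma parentGraph_isBridge {v : V} (hv : v ≠ r) : (parentGraph p r).IsBridge s(v, p v) := by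
  classical
  refine isBridge_iff_forall_walk_mem_edges.2 fun q => q.edges_bypass_subset_edges ?_
  have hne : v ≠ p v := (parentGraph_adj_apply hd hv).ne
  have hsnd := Walk.snd_eq_of_isPath_of_le hd le_rfl q.bypass q.bypass_isPath hne (hd v hv).le
  have := q.bypass.mk_start_snd_mem_edges (Walk.not_nil_of_ne hne)
  rwa [hsnd] at this

lemma parentGraph_isTree : (parentGraph p r).IsTree := by
  refine ⟨(connected_iff_exists_forall_reachable _).2
    ⟨r, fun v => (parentGraph_reachable_root hd v).symm⟩, ?_⟩
  rw [isAcyclic_iff_forall_adj_isBridge]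
  rintro a b hab
  obtain ⟨-, ⟨ha, rfl⟩ | ⟨hb, rfl⟩⟩ := parentGraph_adj.1 hab
  · exact parentGraph_isBridge hd ha
  · rw [Sym2.eq_swap]
    exact parentGraph_isBridge hd hb

end Rank

namespace IsTree

variable {G : SimpleGraph V} (hG : G.IsTree) (r : V)

noncomputable def parent (v : V) : V :=
  (hG.existsUnique_path v r).choose.snd

variable {r}

lemma snd_eq_parent {v : V} {q : G.Walk v r} (hq : q.IsPath) : q.snd = hG.parent r v := by
  rw [(hG.existsUnique_path v r).unique hq (hG.existsUnique_path v r).choose_spec.1]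
  rfl

lemma parent_root : hG.parent r r = r :=
  (hG.snd_eq_parent Walk.IsPath.nil).symm

lemma adj_parent {v : V} (hv : v ≠ r) : G.Adj v (hG.parent r v) :=
  Walk.adj_snd (Walk.not_nil_of_ne hv)

lemma dist_parent_lt {v : V} (hv : v ≠ r) : G.dist (hG.parent r v) r < G.dist v r := by
  obtain ⟨q, hq, hlen⟩ := (hG.connected v r).exists_path_of_dist
  have := q.length_tail_add_one (Walk.not_nil_of_ne hv)
  have := dist_le (q.tail.copy (hG.snd_eq_parent hq) rfl)
  rw [Walk.length_copy] at this
  omega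

lemma parent_eq_or_parent_eq_of_adj {a b : V} (hab : G.Adj a b) :
    hG.parent r a = b ∨ hG.parent r b = a := by
  obtain ⟨qa, hqa⟩ := (hG.connected a r).exists_isPath
  obtain ⟨qb, hqb⟩ := (hG.connected b r).exists_isPath
  by_cases hb : b ∈ qa.support
  · exact .inl ((hG.isAcyclic.eq_snd_of_adj_start hqa hab hb).trans (hG.snd_eq_parent hqa)).symm
  · have ha : a ∈ qb.support := by
      simpa using hG.isAcyclic.mem_support_of_ne_mem_support_of_adj_of_isPath
        hqb.reverse hqa.reverse hab.symm (by simpa using hb)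
    exact .inr ((hG.isAcyclic.eq_snd_of_adj_start hqb hab.symm ha).trans
      (hG.snd_eq_parent hqb)).symm

lemma eq_parentGraph : G = parentGraph (hG.parent r) r := by
  ext a b
  rw [parentGraph_adj]
  constructor
  · intro hab
    refine ⟨hab.ne, ?_⟩
    rcases hG.parent_eq_or_parent_eq_of_adj hab with h | h
    · refine .inl ⟨fun ha => hab.ne ?_, h⟩
      rw [← h, ha, hG.parent_root]
    · refine .inr ⟨fun hb => hab.ne ?_, h⟩
      rw [← h, hb, hG.parent_root]
  · rintro ⟨-, ⟨ha, rfl⟩ | ⟨hb, rfl⟩⟩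
    · exact hG.adj_parent ha
    · exact (hG.adj_parent hb).symm

end IsTree

end SimpleGraph

lemma mapGraph_eq_parentGraph {n : ℕ} {f : ℕ → ℕ} (g : Fin n → Fin n)
    (hfg : ∀ a : Fin n, f a = g a) (hn : 0 < n) : mapGraph n f = parentGraph g ⟨0, hn⟩ := by
  ext a b
  simp only [mapGraph, parentGraph_adj, ne_eq, Fin.ext_iff, hfg]

/-- Cycle-free `[n-1]`-maps, extended by `0` outside `[n-1] = Finset.Ico 1 n`. -/
structure IsCycleFreeMap (n : ℕ) (f : ℕ → ℕ) : Prop where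
  lt_of_mem : ∀ i ∈ Finset.Ico 1 n, f i < n
  eq_zero_of_notMem : ∀ i ∉ Finset.Ico 1 n, f i = 0
  not_hasCycle : ¬HasCycle (Finset.Ico 1 n) f

namespace IsCycleFreeMap

variable {n : ℕ} {f : ℕ → ℕ} (hf : IsCycleFreeMap n f)
include hf

lemma lt {i : ℕ} (hi : i < n) : f i < n := by
  by_cases h : i ∈ Finset.Ico 1 n
  · exact hf.lt_of_mem i h
  · rw [hf.eq_zero_of_notMem i h]
    omega

def toFin : Fin n → Fin n := fun a => ⟨f a, hf.lt a.isLt⟩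

lemma exitTime_toFin_lt (hn : 0 < n) (a : Fin n) (ha : a ≠ ⟨0, hn⟩) :
    exitTime f (Finset.Ico 1 n) (hf.toFin a) < exitTime f (Finset.Ico 1 n) a := by
  have hmem : (a : ℕ) ∈ Finset.Ico 1 n := by
    rw [Finset.mem_Ico]
    exact ⟨Nat.one_le_iff_ne_zero.2 (fun h => ha (Fin.ext h)), a.isLt⟩
  exact exitTime_apply_lt hmem (exists_iterate_notMem_of_not_hasCycle hf.not_hasCycle a)

lemma mapGraph_eq (hn : 0 < n) : mapGraph n f = parentGraph hf.toFin ⟨0, hn⟩ :=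
  mapGraph_eq_parentGraph _ (fun _ => rfl) hn

lemma mapGraph_isTree (hn : 0 < n) : (mapGraph n f).IsTree :=
  hf.mapGraph_eq hn ▸ parentGraph_isTree (d := fun a : Fin n => exitTime f (Finset.Ico 1 n) a)
    (hf.exitTime_toFin_lt hn)

lemma snd_eq_of_isPath {G : SimpleGraph (Fin n)} (hG : G ≤ mapGraph n f) (hn : 0 < n) {a : Fin n}
    (q : G.Walk a ⟨0, hn⟩) (hq : q.IsPath) (ha : a ≠ ⟨0, hn⟩) : (q.snd : ℕ) = f a :=
  congrArg Fin.val <|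
    Walk.snd_eq_of_isPath_of_le (d := fun a : Fin n => exitTime f (Finset.Ico 1 n) a)
      (hf.exitTime_toFin_lt hn) (hG.trans (hf.mapGraph_eq hn).le) q hq ha
      ((exitTime_eq_zero (by simp)).trans_le (Nat.zero_le _))

end IsCycleFreeMap

lemma IsCycleFreeMap.eq_of_mapGraph_eq {n : ℕ} {f g : ℕ → ℕ} (hf : IsCycleFreeMap n f)
    (hg : IsCycleFreeMap n g) (h : mapGraph n f = mapGraph n g) : f = g := by
  funext i
  by_cases hi : i ∈ Finset.Ico 1 n
  · rw [Finset.mem_Ico] at hi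
    have hn : 0 < n := by omega
    have ha : (⟨i, hi.2⟩ : Fin n) ≠ ⟨0, hn⟩ := by simp [Fin.ext_iff]; omega
    obtain ⟨q, hq⟩ := ((hf.mapGraph_isTree hn).connected ⟨i, hi.2⟩ ⟨0, hn⟩).exists_isPath
    exact (hf.snd_eq_of_isPath le_rfl hn q hq ha).symm.trans (hg.snd_eq_of_isPath h.le hn q hq ha)
  · rw [hf.eq_zero_of_notMem i hi, hg.eq_zero_of_notMem i hi]

namespace SimpleGraph.IsTree

variable {n : ℕ} {G : SimpleGraph (Fin n)} (hG : G.IsTree) (hn : 0 < n)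

noncomputable def toMap : ℕ → ℕ :=
  fun i => if h : i < n then hG.parent ⟨0, hn⟩ ⟨i, h⟩ else 0

lemma toMap_isCycleFreeMap : IsCycleFreeMap n (hG.toMap hn) where
  lt_of_mem i hi := by
    rw [Finset.mem_Ico] at hi
    simp [toMap, hi.2]
  eq_zero_of_notMem i hi := by
    rw [Finset.mem_Ico] at hi
    rcases Nat.eq_zero_or_pos i with rfl | hi0
    · simp [toMap, hn, hG.parent_root]
    · simp [toMap, show ¬i < n by omega]
  not_hasCycle := by
    refine not_hasCycle_of_rank (fun i => if h : i < n then G.dist ⟨i, h⟩ ⟨0, hn⟩ else 0) ?_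
    intro i hi
    rw [Finset.mem_Ico] at hi
    simpa [toMap, hi.2] using hG.dist_parent_lt (v := ⟨i, hi.2⟩) (by simp [Fin.ext_iff]; omega)

lemma mapGraph_toMap : mapGraph n (hG.toMap hn) = G :=
  (mapGraph_eq_parentGraph _ (fun a => dif_pos a.isLt) hn).trans hG.eq_parentGraph.symm

end SimpleGraph.IsTree

/-- For `n ≥ 2`, the mapping sending an `[n-1]`-map `f` to the graph with an edge
between `i` and `f i` for each `i ∈ [n-1]` is a bijection between the set of
cycle-free `[n-1]`-maps (encoded as functions `ℕ → ℕ` vanishing outside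
`[n-1] = {1, …, n-1}`) and the set of trees on the `n` vertices `0, 1, …, n-1`;
moreover the inverse sends a tree to the map associating to each vertex `i ≠ 0` the
second vertex on the unique path from `i` to `0`. -/
theorem cycleFree_maps_tree_bijection (n : ℕ) (hn : 2 ≤ n) :
    Set.BijOn (mapGraph n)
      {f : ℕ → ℕ | (∀ i ∈ Finset.Ico 1 n, f i < n) ∧
        (∀ i ∉ Finset.Ico 1 n, f i = 0) ∧ ¬ HasCycle (Finset.Ico 1 n) f}
      {G : SimpleGraph (Fin n) | G.IsTree}
    ∧
    ∀ f : ℕ → ℕ, (∀ i ∈ Finset.Ico 1 n, f i < n) →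
      (∀ i ∉ Finset.Ico 1 n, f i = 0) → ¬ HasCycle (Finset.Ico 1 n) f →
      ∀ i (hi1 : 1 ≤ i) (hin : i < n) (hfi : f i < n)
        (p : (mapGraph n f).Walk ⟨i, hin⟩ ⟨0, by omega⟩),
        p.IsPath → p.getVert 1 = ⟨f i, hfi⟩ := by
  have hn0 : 0 < n := by omega
  refine ⟨⟨fun f ⟨h1, h2, h3⟩ => (IsCycleFreeMap.mk h1 h2 h3).mapGraph_isTree hn0, ?_, ?_⟩, ?_⟩
  · rintro f ⟨hf1, hf2, hf3⟩ g ⟨hg1, hg2, hg3⟩ h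
    exact IsCycleFreeMap.eq_of_mapGraph_eq ⟨hf1, hf2, hf3⟩ ⟨hg1, hg2, hg3⟩ h
  · intro G hG
    obtain ⟨h1, h2, h3⟩ := hG.toMap_isCycleFreeMap hn0
    exact ⟨hG.toMap hn0, ⟨h1, h2, h3⟩, hG.mapGraph_toMap hn0⟩
  · intro f hf1 hf2 hf3 i hi1 hin hfi p hp
    exact Fin.ext <| IsCycleFreeMap.snd_eq_of_isPath ⟨hf1, hf2, hf3⟩ le_rfl hn0 p hp
      (by simp [Fin.ext_iff]; omega)
end

section
/- Let S be a finite nonempty set of positive integers, let π be a probability distribution on S, and for each i ∈ S let p_i ∈ [0,1]. Let f be a random S-map whose values f(i) are chosen independently so that with probability p_i the value f(i) is chosen from S according to π, and otherwise f(i) = 0. Then the probability that f has a cycle equals the expected number of fixed points of f, i.e. the expected number of i ∈ S with f(i) = i. -/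
open MeasureTheory

/-!
Write `q i = p i * π i = P(f i = i)`, so the right-hand side is `∑ i ∈ S, q i`. On its set `C`
of periodic points an `S`-map is a permutation, and off `C` it is acyclic. Since `f i` lands
on `j ∈ S` with probability `p i * π j`, every permutation of `C` has probability
`∏ i ∈ C, q i`, so by independence
`∑ C ⊆ T, |C|! * (∏ i ∈ C, q i) * A (T \ C) = 1` for all `T ⊆ S`, where `A U` is the
probability that `f` has no cycle inside `U`. This triangular system determines `A`, and
`A U = 1 - ∑ i ∈ U, q i` solves it, so `P(f has a cycle) = 1 - A S = ∑ i ∈ S, q i`.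
-/

open Finset
open scoped Nat

namespace Set

variable {α : Type*} {f g : α → α} {s : Set α}

theorem EqOn.iterate_of_mapsTo (hfg : EqOn f g s) (hf : MapsTo f s s) :
    ∀ n, EqOn f^[n] g^[n] s
  | 0 => fun _ _ => rfl
  | n + 1 => fun x hx => by
    rw [Function.iterate_succ_apply, Function.iterate_succ_apply, hfg hx]
    exact hfg.iterate_of_mapsTo hf n (hfg hx ▸ hf hx)

theorem MapsTo.mem_periodicPts_of_eqOn (hf : MapsTo f s s) (hfg : EqOn f g s) {x : α}
    (hx : x ∈ s) (hxf : x ∈ Function.periodicPts f) : x ∈ Function.periodicPts g := by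
  obtain ⟨n, hn, hper⟩ := Function.mem_periodicPts.1 hxf
  refine Function.mk_mem_periodicPts hn ?_
  rw [Function.IsPeriodicPt, Function.IsFixedPt, ← hfg.iterate_of_mapsTo hf n hx]
  exact hper

theorem BijOn.subset_periodicPts (hf : BijOn f s s) (hs : s.Finite) :
    s ⊆ Function.periodicPts f := by
  have : Finite s := hs
  have hinj : Function.Injective (hf.mapsTo.restrict f s s) := hf.mapsTo.restrict_inj.2 hf.injOn
  intro x hx
  exact (Function.Semiconj.mapsTo_periodicPts (g := Subtype.val) (fun _ => rfl))
    (hinj.mem_periodicPts ⟨x, hx⟩)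

theorem bijOn_of_subset_periodicPts (hs : s.Finite) (hf : MapsTo f s s)
    (hper : s ⊆ Function.periodicPts f) : BijOn f s s :=
  (hs.injOn_iff_bijOn_of_mapsTo hf).1 ((Function.bijOn_periodicPts f).injOn.mono hper)

theorem MapsTo.diff_periodicPts (hs : s.Finite) (hf : MapsTo f s s)
    (hper : s ⊆ Function.periodicPts f) :
    MapsTo f (Function.periodicPts f \ s) (Function.periodicPts f \ s) := by
  rintro x ⟨hxP, hxs⟩
  refine ⟨(Function.bijOn_periodicPts f).mapsTo hxP, fun hfx => hxs ?_⟩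
  obtain ⟨y, hy, hyx⟩ := (bijOn_of_subset_periodicPts hs hf hper).surjOn hfx
  exact (Function.bijOn_periodicPts f).injOn (hper hy) hxP hyx ▸ hy

end Set

namespace Finset

variable {α : Type*} [DecidableEq α]

theorem sum_powerset_sum_sdiff {M : Type*} [AddCommMonoid M] (T : Finset α)
    (f : Finset α → α → M) :
    ∑ C ∈ T.powerset, ∑ i ∈ T \ C, f C i = ∑ D ∈ T.powerset, ∑ i ∈ D, f (D.erase i) i := by
  rw [sum_sigma', sum_sigma']
  refine sum_nbij' (fun x => ⟨insert x.2 x.1, x.2⟩) (fun x => ⟨x.1.erase x.2, x.2⟩)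
    ?_ ?_ ?_ ?_ ?_
  · rintro ⟨C, i⟩ hx
    simp only [mem_sigma, mem_powerset, mem_sdiff] at hx ⊢
    exact ⟨insert_subset hx.2.1 hx.1, mem_insert_self i C⟩
  · rintro ⟨D, i⟩ hx
    simp only [mem_sigma, mem_powerset, mem_sdiff] at hx ⊢
    exact ⟨(erase_subset i D).trans hx.1, hx.1 hx.2, notMem_erase i D⟩
  · rintro ⟨C, i⟩ hx
    simp only [mem_sigma, mem_sdiff] at hx
    simp [erase_insert hx.2.2]
  · rintro ⟨D, i⟩ hx
    simp only [mem_sigma] at hx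
    simp [insert_erase hx.2]
  · rintro ⟨C, i⟩ hx
    simp only [mem_sigma, mem_sdiff] at hx
    simp [erase_insert hx.2.2]

/-- Double counting the pairs `(C, i)` with `i ∉ C` makes all terms with `C ≠ ∅` cancel. -/
theorem sum_powerset_factorial_mul_prod_mul_one_sub_sum {R : Type*} [CommRing R]
    (T : Finset α) (q : α → R) :
    ∑ C ∈ T.powerset, (C.card ! : R) * (∏ i ∈ C, q i) * (1 - ∑ i ∈ T \ C, q i) = 1 := by
  have hinner : ∀ D : Finset α,
      ∑ i ∈ D, ((D.erase i).card ! : R) * (∏ j ∈ D.erase i, q j) * q i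
        = if D = ∅ then 0 else (D.card ! : R) * ∏ j ∈ D, q j := by
    intro D
    split_ifs with hD
    · simp [hD]
    · have hcard : D.card = (D.card - 1) + 1 :=
        (Nat.sub_add_cancel (card_pos.2 (nonempty_iff_ne_empty.2 hD))).symm
      rw [sum_congr rfl fun i hi => by rw [mul_assoc, prod_erase_mul _ _ hi,
        card_erase_of_mem hi], sum_const, nsmul_eq_mul, ← mul_assoc, hcard,
        Nat.factorial_succ]
      push_cast
      ring
  simp_rw [mul_sub, mul_one, mul_sum, sum_sub_distrib]
  rw [sum_powerset_sum_sdiff, sum_congr rfl fun D _ => hinner D, ← sum_sub_distrib,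
    sum_eq_single_of_mem ∅ (empty_mem_powerset T) fun D _ hD => by simp [hD]]
  simp

theorem eq_of_sum_powerset_mul_sdiff_eq {R : Type*} [Ring R] [IsDomain R]
    {K A B : Finset α → R} (hK : K ∅ ≠ 0) {S : Finset α}
    (h : ∀ T ⊆ S, ∑ C ∈ T.powerset, K C * A (T \ C) = ∑ C ∈ T.powerset, K C * B (T \ C)) :
    ∀ T ⊆ S, A T = B T := by
  intro T
  induction T using strongInduction with
  | H T ih =>
    intro hTS
    have hrest : ∀ C ∈ T.powerset.erase ∅, K C * A (T \ C) = K C * B (T \ C) := by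
      intro C hC
      obtain ⟨hC0, hCT⟩ := mem_erase.1 hC
      rw [ih _ (sdiff_ssubset (mem_powerset.1 hCT) (nonempty_iff_ne_empty.2 hC0))
        (sdiff_subset.trans hTS)]
    have hT := h T hTS
    rw [← add_sum_erase _ _ (empty_mem_powerset T), ← add_sum_erase _ _ (empty_mem_powerset T),
      sum_congr rfl hrest, sdiff_empty, add_left_inj] at hT
    exact mul_left_cancel₀ hK hT

end Finset

noncomputable section

namespace SMap

open Function
open scoped Classical

variable {T C V : Finset ℕ} {g σ h : ℕ → ℕ}

def mapsOn (T V : Finset ℕ) : Finset (ℕ → ℕ) :=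
  (T.pi fun _ => V).image fun f n => if hn : n ∈ T then f n hn else 0

theorem mem_mapsOn : g ∈ mapsOn T V ↔ (∀ n ∉ T, g n = 0) ∧ ∀ n ∈ T, g n ∈ V := by
  constructor
  · simp only [mapsOn, mem_image, mem_pi]
    rintro ⟨f, hf, rfl⟩
    exact ⟨fun n hn => dif_neg hn, fun n hn => by simpa [hn] using hf n hn⟩
  · rintro ⟨hzero, hV⟩
    refine mem_image.2 ⟨fun n _ => g n, mem_pi.2 hV, funext fun n => ?_⟩
    by_cases hn : n ∈ T
    · simp [hn]
    · simp [hn, hzero n hn]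

def periodicIn (T : Finset ℕ) (g : ℕ → ℕ) : Finset ℕ := T.filter (· ∈ periodicPts g)

theorem mem_periodicIn {x : ℕ} : x ∈ periodicIn T g ↔ x ∈ T ∧ x ∈ periodicPts g :=
  mem_filter

theorem periodicIn_subset : periodicIn T g ⊆ T := filter_subset _ _

/-- A map vanishing off `T ∌ 0` sends everything outside `T` to the fixed point `0`, so
by injectivity on periodic points no periodic orbit starting in `T` ever leaves it. -/
theorem mapsTo_periodicIn (h0 : 0 ∉ T) (hg : ∀ n ∉ T, g n = 0) :
    Set.MapsTo g (periodicIn T g) (periodicIn T g) := by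
  have hinj := (bijOn_periodicPts g).injOn
  have hg0 : g 0 = 0 := hg 0 h0
  have h0P : 0 ∈ periodicPts g := mk_mem_periodicPts one_pos hg0
  intro x hx
  obtain ⟨hxT, hxP⟩ := mem_periodicIn.1 hx
  have hgxP := (bijOn_periodicPts g).mapsTo hxP
  refine mem_periodicIn.2 ⟨by_contra fun hgx => ?_, hgxP⟩
  have hgx0 : g x = 0 := hinj hgxP h0P (by rw [hg _ hgx, hg0])
  exact h0 (hinj hxP h0P (hgx0.trans hg0.symm) ▸ hxT)

theorem bijOn_periodicIn (h0 : 0 ∉ T) (hg : ∀ n ∉ T, g n = 0) :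
    Set.BijOn g (periodicIn T g) (periodicIn T g) :=
  Set.bijOn_of_subset_periodicPts (finite_toSet _) (mapsTo_periodicIn h0 hg)
    fun _ hx => (mem_periodicIn.1 hx).2

theorem piecewise_zero_eq_self (hg : ∀ n ∉ T, g n = 0) : T.piecewise g 0 = g :=
  funext fun n => by by_cases hn : n ∈ T <;> simp [hn, hg]

theorem piecewise_piecewise_zero_sdiff (hg : ∀ n ∉ T, g n = 0) :
    C.piecewise (C.piecewise g 0) ((T \ C).piecewise g 0) = g := by
  refine funext fun n => ?_
  by_cases hnC : n ∈ C
  · simp [hnC]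
  · by_cases hnT : n ∈ T
    · simp [hnC, hnT]
    · simp [hnC, hnT, hg n hnT]

theorem piecewise_zero_mem_mapsOn (hCT : C ⊆ T) (hg : g ∈ mapsOn T V) :
    C.piecewise g 0 ∈ mapsOn C V :=
  mem_mapsOn.2 ⟨fun n hn => by simp [hn], fun n hn => by
    simpa [hn] using (mem_mapsOn.1 hg).2 n (hCT hn)⟩

theorem piecewise_mem_mapsOn (hCT : C ⊆ T) (hσ : σ ∈ mapsOn C V) (hh : h ∈ mapsOn (T \ C) V) :
    C.piecewise σ h ∈ mapsOn T V := by
  refine mem_mapsOn.2 ⟨fun n hn => ?_, fun n hn => ?_⟩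
  · have hnC : n ∉ C := fun hnC => hn (hCT hnC)
    simpa [hnC] using (mem_mapsOn.1 hh).1 n fun hn' => hn (mem_sdiff.1 hn').1
  · by_cases hnC : n ∈ C
    · simpa [hnC] using (mem_mapsOn.1 hσ).2 n hnC
    · simpa [hnC] using (mem_mapsOn.1 hh).2 n (mem_sdiff.2 ⟨hn, hnC⟩)

def cyclicMaps (C V : Finset ℕ) : Finset (ℕ → ℕ) :=
  (mapsOn C V).filter fun σ => Set.BijOn σ C C

def acyclicMaps (U V : Finset ℕ) : Finset (ℕ → ℕ) :=
  (mapsOn U V).filter fun h => periodicIn U h = ∅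

theorem bijOn_piecewise_periodicIn (h0 : 0 ∉ T) (hg : ∀ n ∉ T, g n = 0) :
    Set.BijOn ((periodicIn T g).piecewise g 0) (periodicIn T g) (periodicIn T g) :=
  (bijOn_periodicIn h0 hg).congr fun _ hx => (piecewise_eq_of_mem _ _ _ hx).symm

theorem periodicIn_sdiff_piecewise (h0 : 0 ∉ T) :
    periodicIn (T \ periodicIn T g) ((T \ periodicIn T g).piecewise g 0) = ∅ := by
  set U := T \ periodicIn T g
  have hU0 : 0 ∉ U := fun h => h0 (mem_sdiff.1 h).1
  refine eq_empty_of_forall_notMem fun x hx => ?_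
  have hxU : x ∈ U := periodicIn_subset hx
  have hxP : x ∈ periodicPts g :=
    (mapsTo_periodicIn hU0 fun n hn => piecewise_eq_of_notMem _ _ _ hn).mem_periodicPts_of_eqOn
      (fun y hy => piecewise_eq_of_mem _ _ _ (periodicIn_subset hy)) hx (mem_periodicIn.1 hx).2
  exact (mem_sdiff.1 hxU).2 (mem_periodicIn.2 ⟨(mem_sdiff.1 hxU).1, hxP⟩)

/-- Off `C` the glued map agrees with `h`, and it maps the periodic points outside `C` to
themselves because it permutes `C`. -/
theorem periodicIn_piecewise (hCT : C ⊆ T) (hσ : Set.BijOn σ C C)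
    (hh : periodicIn (T \ C) h = ∅) : periodicIn T (C.piecewise σ h) = C := by
  set g := C.piecewise σ h
  have hσg : Set.EqOn σ g C := fun x hx => (piecewise_eq_of_mem _ _ _ hx).symm
  have hCP : (C : Set ℕ) ⊆ periodicPts g := fun x hx =>
    hσ.mapsTo.mem_periodicPts_of_eqOn hσg hx (hσ.subset_periodicPts (finite_toSet C) hx)
  have hgC : Set.MapsTo g C C := hσ.mapsTo.congr hσg
  refine Subset.antisymm (fun x hx => by_contra fun hxC => ?_) fun x hx =>
    mem_periodicIn.2 ⟨hCT hx, hCP hx⟩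
  obtain ⟨hxT, hxP⟩ := mem_periodicIn.1 hx
  have hxh : x ∈ periodicPts h :=
    (hgC.diff_periodicPts (finite_toSet C) hCP).mem_periodicPts_of_eqOn
      (fun y hy => piecewise_eq_of_notMem _ _ _ hy.2) ⟨hxP, hxC⟩ hxP
  exact notMem_empty x (hh ▸ mem_periodicIn.2 ⟨mem_sdiff.2 ⟨hxT, hxC⟩, hxh⟩)

variable {M : Type*} [AddCommMonoid M]

theorem sum_mapsOn_filter_periodicIn_eq (h0 : 0 ∉ T) (hCT : C ⊆ T) (f : (ℕ → ℕ) → M) :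
    ∑ g ∈ mapsOn T V with periodicIn T g = C, f g =
      ∑ σ ∈ cyclicMaps C V, ∑ h ∈ acyclicMaps (T \ C) V, f (C.piecewise σ h) := by
  rw [← sum_product']
  refine sum_nbij' (fun g => (C.piecewise g 0, (T \ C).piecewise g 0))
    (fun q => C.piecewise q.1 q.2) ?_ ?_ ?_ ?_ ?_
  · intro g hg
    obtain ⟨hgT, rfl⟩ := mem_filter.1 hg
    exact mem_product.2 ⟨mem_filter.2 ⟨piecewise_zero_mem_mapsOn hCT hgT,
      bijOn_piecewise_periodicIn h0 (mem_mapsOn.1 hgT).1⟩, mem_filter.2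
      ⟨piecewise_zero_mem_mapsOn sdiff_subset hgT, periodicIn_sdiff_piecewise h0⟩⟩
  · rintro ⟨σ, h⟩ hq
    obtain ⟨hσ, hh⟩ := mem_product.1 hq
    exact mem_filter.2 ⟨piecewise_mem_mapsOn hCT (mem_filter.1 hσ).1 (mem_filter.1 hh).1,
      periodicIn_piecewise hCT (mem_filter.1 hσ).2 (mem_filter.1 hh).2⟩
  · intro g hg
    exact piecewise_piecewise_zero_sdiff (mem_mapsOn.1 (mem_filter.1 hg).1).1
  · rintro ⟨σ, h⟩ hq
    obtain ⟨hσ, hh⟩ := mem_product.1 hq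
    rw [piecewise_idem_left, piecewise_zero_eq_self (mem_mapsOn.1 (mem_filter.1 hσ).1).1]
    refine Prod.ext rfl (funext fun n => ?_)
    by_cases hn : n ∈ T \ C
    · simp [hn, (mem_sdiff.1 hn).2]
    · simp [hn, ((mem_mapsOn.1 (mem_filter.1 hh).1).1 n hn).symm]
  · intro g hg
    rw [piecewise_piecewise_zero_sdiff (mem_mapsOn.1 (mem_filter.1 hg).1).1]

theorem sum_mapsOn_eq_sum_powerset (h0 : 0 ∉ T) (f : (ℕ → ℕ) → M) :
    ∑ g ∈ mapsOn T V, f g =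
      ∑ C ∈ T.powerset, ∑ σ ∈ cyclicMaps C V, ∑ h ∈ acyclicMaps (T \ C) V,
        f (C.piecewise σ h) := by
  rw [← sum_fiberwise_of_maps_to fun g _ => mem_powerset.2 periodicIn_subset]
  exact sum_congr rfl fun C hC => sum_mapsOn_filter_periodicIn_eq h0 (mem_powerset.1 hC) f

variable {R : Type*} [CommRing R]

def weight (wt : ℕ → ℕ → R) (T : Finset ℕ) (g : ℕ → ℕ) : R := ∏ i ∈ T, wt i (g i)

variable {wt : ℕ → ℕ → R}

theorem weight_piecewise (hCT : C ⊆ T) :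
    weight wt T (C.piecewise σ h) = weight wt C σ * weight wt (T \ C) h := by
  rw [weight, ← union_sdiff_of_subset hCT, prod_union disjoint_sdiff, union_sdiff_of_subset hCT]
  congr 1
  · exact prod_congr rfl fun i hi => by rw [piecewise_eq_of_mem _ _ _ hi]
  · exact prod_congr rfl fun i hi => by rw [piecewise_eq_of_notMem _ _ _ (mem_sdiff.1 hi).2]

theorem sum_weight_mapsOn : ∑ g ∈ mapsOn T V, weight wt T g = ∏ i ∈ T, ∑ v ∈ V, wt i v := by
  rw [prod_sum, mapsOn, sum_image]
  · refine sum_congr rfl fun f _ => ?_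
    rw [weight, ← prod_attach]
    exact prod_congr rfl fun x _ => by rw [dif_pos x.2]
  · intro f _ f' _ hff'
    funext n hn
    simpa [hn] using congrFun hff' n

theorem card_cyclicMaps (hCV : C ⊆ V) : #(cyclicMaps C V) = C.card ! := by
  rw [← Fintype.card_coe C, ← Fintype.card_perm, ← card_univ]
  symm
  refine card_bij (fun e _ n => if hn : n ∈ C then (e ⟨n, hn⟩ : ℕ) else 0) ?_ ?_ ?_
  · intro e _
    refine mem_filter.2 ⟨mem_mapsOn.2 ⟨fun n hn => dif_neg hn, fun n hn => ?_⟩, ?_⟩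
    · rw [dif_pos hn]
      exact hCV (e _).2
    · refine ((finite_toSet C).injOn_iff_bijOn_of_mapsTo fun n hn => ?_).1
        fun x hx y hy hxy => ?_
      · rw [dif_pos (mem_coe.1 hn)]
        exact (e _).2
      · rw [dif_pos (mem_coe.1 hx), dif_pos (mem_coe.1 hy)] at hxy
        exact congrArg Subtype.val (e.injective (Subtype.ext hxy))
  · intro e _ e' _ hee'
    ext x
    simpa [x.2] using congrFun hee' x
  · intro σ hσ
    obtain ⟨hσV, hσC⟩ := mem_filter.1 hσ
    refine ⟨hσC.equiv, mem_univ _, funext fun n => ?_⟩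
    by_cases hn : n ∈ C
    · simp [hn, Set.BijOn.equiv]
    · simp [hn, (mem_mapsOn.1 hσV).1 n hn]

theorem weight_of_bijOn {p π : ℕ → R} (hrank : ∀ i ∈ C, ∀ j ∈ C, wt i j = p i * π j)
    (hσ : Set.BijOn σ C C) : weight wt C σ = ∏ i ∈ C, wt i i := by
  have hπ : ∏ i ∈ C, π (σ i) = ∏ i ∈ C, π i :=
    prod_nbij σ (fun _ hi => hσ.mapsTo hi) hσ.injOn hσ.surjOn fun _ _ => rfl
  rw [weight, prod_congr rfl fun i hi => hrank i hi (σ i) (hσ.mapsTo hi), prod_mul_distrib, hπ,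
    ← prod_mul_distrib]
  exact prod_congr rfl fun i hi => (hrank i hi i hi).symm

theorem sum_weight_cyclicMaps {p π : ℕ → R} (hCV : C ⊆ V)
    (hrank : ∀ i ∈ C, ∀ j ∈ C, wt i j = p i * π j) :
    ∑ σ ∈ cyclicMaps C V, weight wt C σ = C.card ! * ∏ i ∈ C, wt i i := by
  have hσ : ∀ σ ∈ cyclicMaps C V, weight wt C σ = ∏ i ∈ C, wt i i :=
    fun σ hσ => weight_of_bijOn hrank (mem_filter.1 hσ).2
  rw [sum_congr rfl hσ, sum_const, card_cyclicMaps hCV, nsmul_eq_mul]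

theorem sum_weight_acyclicMaps [IsDomain R] {S : Finset ℕ} {p π : ℕ → R} (h0 : 0 ∉ S)
    (hSV : S ⊆ V) (hnorm : ∀ i ∈ S, ∑ v ∈ V, wt i v = 1)
    (hrank : ∀ i ∈ S, ∀ j ∈ S, wt i j = p i * π j) :
    ∀ T ⊆ S, ∑ h ∈ acyclicMaps T V, weight wt T h = 1 - ∑ i ∈ T, wt i i := by
  refine eq_of_sum_powerset_mul_sdiff_eq (K := fun C => C.card ! * ∏ i ∈ C, wt i i)
    (by simp) fun T hTS => ?_
  have hK : ∀ C ∈ T.powerset, ∑ σ ∈ cyclicMaps C V, weight wt C σ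
      = C.card ! * ∏ i ∈ C, wt i i := fun C hC =>
    have hCS := (mem_powerset.1 hC).trans hTS
    sum_weight_cyclicMaps (hCS.trans hSV) fun i hi j hj => hrank i (hCS hi) j (hCS hj)
  calc ∑ C ∈ T.powerset, (C.card ! * ∏ i ∈ C, wt i i) *
        ∑ h ∈ acyclicMaps (T \ C) V, weight wt (T \ C) h
      = ∑ g ∈ mapsOn T V, weight wt T g := by
        rw [sum_mapsOn_eq_sum_powerset fun h => h0 (hTS h)]
        refine sum_congr rfl fun C hC => ?_
        rw [← hK C hC, sum_mul_sum]
        exact sum_congr rfl fun σ _ => sum_congr rfl fun h _ =>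
          (weight_piecewise (mem_powerset.1 hC)).symm
    _ = 1 := by rw [sum_weight_mapsOn, prod_eq_one fun i hi => hnorm i (hTS hi)]
    _ = _ := (sum_powerset_factorial_mul_prod_mul_one_sub_sum T _).symm

theorem hasCycle_congr {S : Finset ℕ} {f f' : ℕ → ℕ} (h : Set.EqOn f f' S) :
    HasCycle S f ↔ HasCycle S f' := by
  suffices ∀ {f f' : ℕ → ℕ}, Set.EqOn f f' S → HasCycle S f → HasCycle S f' from
    ⟨this h, this h.symm⟩
  rintro f f' h ⟨k, a, hk, haS, hstep, hlast⟩
  exact ⟨k, a, hk, haS, fun i hi => h (haS i (by omega)) ▸ hstep i hi,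
    h (haS (k - 1) (by omega)) ▸ hlast⟩

theorem hasCycle_iff_nonempty_periodicIn (h0 : 0 ∉ T) (hg : ∀ n ∉ T, g n = 0) :
    HasCycle T g ↔ (periodicIn T g).Nonempty := by
  constructor
  · rintro ⟨k, a, hk, haT, hstep, hlast⟩
    have horbit : ∀ i < k, g^[i] (a 0) = a i := by
      intro i
      induction i with
      | zero => exact fun _ => rfl
      | succ i ih => exact fun hi => by rw [iterate_succ_apply', ih (by omega), hstep i hi]
    refine ⟨a 0, mem_periodicIn.2 ⟨haT 0 hk, mk_mem_periodicPts hk ?_⟩⟩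
    rw [IsPeriodicPt, IsFixedPt, ← Nat.sub_add_cancel hk, iterate_succ_apply',
      horbit (k - 1) (by omega), hlast]
  · rintro ⟨x, hx⟩
    obtain ⟨k, hk, hper⟩ := mem_periodicPts.1 (mem_periodicIn.1 hx).2
    refine ⟨k, fun n => g^[n] x, hk,
      fun n _ => periodicIn_subset ((mapsTo_periodicIn h0 hg).iterate n hx),
      fun n _ => (iterate_succ_apply' g n x).symm, ?_⟩
    change g (g^[k - 1] x) = x
    rw [← iterate_succ_apply' g, Nat.succ_eq_add_one, Nat.sub_add_cancel hk]
    exact hper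

theorem sum_weight_hasCycle [IsDomain R] {S : Finset ℕ} {p π : ℕ → R} (h0 : 0 ∉ S)
    (hSV : S ⊆ V) (hnorm : ∀ i ∈ S, ∑ v ∈ V, wt i v = 1)
    (hrank : ∀ i ∈ S, ∀ j ∈ S, wt i j = p i * π j) :
    ∑ g ∈ mapsOn S V with HasCycle S g, weight wt S g = ∑ i ∈ S, wt i i := by
  have hacyclic : {g ∈ mapsOn S V | ¬HasCycle S g} = acyclicMaps S V :=
    filter_congr fun g hg => by
      rw [hasCycle_iff_nonempty_periodicIn h0 (mem_mapsOn.1 hg).1, not_nonempty_iff_eq_empty]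
  have htotal := sum_filter_add_sum_filter_not (mapsOn S V) (HasCycle S) (weight wt S)
  rw [hacyclic, sum_weight_acyclicMaps h0 hSV hnorm hrank S subset_rfl, sum_weight_mapsOn,
    prod_eq_one hnorm] at htotal
  linear_combination htotal

end SMap

end

section Probability

open ProbabilityTheory

variable {Ω ι β : Type*}

theorem setOf_forall_mem_eq_iInter (S : Finset ι) (F : Ω → ι → β) (g : ι → β) :
    {ω | ∀ i ∈ S, F ω i = g i} = ⋂ i : S, (fun ω => F ω i) ⁻¹' {g i} := by
  ext ω
  simp

variable [MeasurableSpace Ω] {μ : Measure Ω}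

theorem ProbabilityTheory.iIndepFun.measureReal_forall_mem_eq [MeasurableSpace β]
    [MeasurableSingletonClass β] {S : Finset ι} {F : Ω → ι → β}
    (hindep : iIndepFun (fun (i : S) ω => F ω i) μ) (g : ι → β) :
    μ.real {ω | ∀ i ∈ S, F ω i = g i} = ∏ i ∈ S, μ.real {ω | F ω i = g i} := by
  rw [measureReal_def, setOf_forall_mem_eq_iInter,
    hindep.meas_iInter fun i => ⟨{g i}, measurableSet_singleton _, rfl⟩, ENNReal.toReal_prod,
    ← prod_coe_sort S]
  rfl

theorem integral_card_filter_mem [IsFiniteMeasure μ] {S : Finset ι} {E : ι → Set Ω}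
    [∀ i, DecidablePred (· ∈ E i)] (hE : ∀ i ∈ S, MeasurableSet (E i)) :
    ∫ ω, (#{i ∈ S | ω ∈ E i} : ℝ) ∂μ = ∑ i ∈ S, μ.real (E i) := by
  have hcard : ∀ ω, (#{i ∈ S | ω ∈ E i} : ℝ) = ∑ i ∈ S, (E i).indicator 1 ω := fun ω => by
    rw [natCast_card_filter]
    exact sum_congr rfl fun i _ => by simp [Set.indicator_apply]
  simp_rw [hcard]
  rw [integral_finsetSum S fun i hi => (integrable_const 1).indicator (hE i hi)]
  exact sum_congr rfl fun i hi => integral_indicator_one (hE i hi)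

theorem sum_measureReal_eq_one_of_forall_mem [IsProbabilityMeasure μ] [MeasurableSpace β]
    [MeasurableSingletonClass β] {X : Ω → β} {V : Finset β} (hX : Measurable X)
    (hV : ∀ ω, X ω ∈ V) : ∑ v ∈ V, μ.real {ω | X ω = v} = 1 := by
  have hpre : X ⁻¹' V = Set.univ := Set.preimage_eq_univ_iff.2 <| by
    rintro _ ⟨ω, rfl⟩
    exact hV ω
  rw [← probReal_univ (μ := μ), ← hpre]
  exact sum_measureReal_preimage_singleton V fun v _ => hX (measurableSet_singleton v)

namespace SMap

open scoped Classical

variable {S : Finset ℕ} {F : Ω → ℕ → ℕ}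

theorem measureReal_hasCycle_eq_sum_weight [IsFiniteMeasure μ]
    (hSmap : ∀ ω, ∀ i ∈ S, F ω i ∈ S ∨ F ω i = 0)
    (hmeas : ∀ i ∈ S, Measurable fun ω => F ω i)
    (hindep : iIndepFun (fun (i : S) ω => F ω i) μ) :
    μ.real {ω | HasCycle S (F ω)} =
      ∑ g ∈ mapsOn S (insert 0 S) with HasCycle S g,
        weight (fun i v => μ.real {ω | F ω i = v}) S g := by
  set R : Ω → ℕ → ℕ := fun ω => S.piecewise (F ω) 0
  have hRS : ∀ ω, Set.EqOn (R ω) (F ω) S := fun ω i hi => piecewise_eq_of_mem _ _ _ hi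
  have hR : ∀ ω, R ω ∈ mapsOn S (insert 0 S) := fun ω => mem_mapsOn.2
    ⟨fun n hn => piecewise_eq_of_notMem _ _ _ hn, fun n hn => by
      rw [hRS ω hn, mem_insert]
      exact (hSmap ω n hn).symm⟩
  have hfiber : ∀ g ∈ mapsOn S (insert 0 S), R ⁻¹' {g} = {ω | ∀ i ∈ S, F ω i = g i} := by
    intro g hg
    ext ω
    refine ⟨fun h i hi => (hRS ω hi).symm.trans (congrFun h i), fun h => funext fun n => ?_⟩
    by_cases hn : n ∈ S
    · exact (hRS ω hn).trans (h n hn)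
    · rw [(mem_mapsOn.1 (hR ω)).1 n hn, (mem_mapsOn.1 hg).1 n hn]
  have hevent : {ω | HasCycle S (F ω)} =
      R ⁻¹' ↑({g ∈ mapsOn S (insert 0 S) | HasCycle S g} : Finset (ℕ → ℕ)) := by
    ext ω
    simp [hR ω, hasCycle_congr (hRS ω)]
  rw [hevent, ← sum_measureReal_preimage_singleton]
  · refine sum_congr rfl fun g hg => ?_
    rw [hfiber g (mem_filter.1 hg).1, hindep.measureReal_forall_mem_eq]
    rfl
  · intro g hg
    rw [hfiber g (mem_filter.1 hg).1, setOf_forall_mem_eq_iInter]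
    exact MeasurableSet.iInter fun i => hmeas i i.2 (measurableSet_singleton _)

end SMap

end Probability

theorem cycle_prob_eq_expected_fixed_points_general
    (S : Finset ℕ) (hpos : ∀ i ∈ S, 0 < i)
    (π : ℕ → ℝ)
    (p : ℕ → ℝ)
    {Ω : Type*} [MeasurableSpace Ω] (μ : Measure Ω) [IsProbabilityMeasure μ]
    (F : Ω → ℕ → ℕ)
    (hSmap : ∀ ω, ∀ i ∈ S, F ω i ∈ S ∨ F ω i = 0)
    (hmeas : ∀ i ∈ S, Measurable fun ω => F ω i)
    (hindep : ProbabilityTheory.iIndepFun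
      (fun (i : {i // i ∈ S}) ω => F ω i.val) μ)
    (hval : ∀ i ∈ S, ∀ j ∈ S, (μ {ω | F ω i = j}).toReal = p i * π j) :
    (μ {ω | HasCycle S (F ω)}).toReal =
      ∫ ω, ((S.filter fun i => F ω i = i).card : ℝ) ∂μ := by
  have h0 : 0 ∉ S := fun h => (hpos 0 h).false
  have hnorm : ∀ i ∈ S, ∑ v ∈ insert 0 S, μ.real {ω | F ω i = v} = 1 := fun i hi =>
    sum_measureReal_eq_one_of_forall_mem (hmeas i hi) fun ω => by
      rw [mem_insert]
      exact (hSmap ω i hi).symm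
  rw [← measureReal_def, SMap.measureReal_hasCycle_eq_sum_weight hSmap hmeas hindep,
    SMap.sum_weight_hasCycle h0 (subset_insert 0 S) hnorm hval]
  exact (integral_card_filter_mem (E := fun i => {ω | F ω i = i})
    fun i hi => hmeas i hi (measurableSet_singleton i)).symm

/-- Let `S` be a finite nonempty set of positive integers, `π` a probability
distribution on `S`, and `p i ∈ [0,1]` for each `i ∈ S`.  Let `F` be a random
`S`-map whose values are independent, with `F i` distributed according to `π` with
probability `p i` and equal to `0` otherwise.  Then the probability that `F` has a
cycle equals the expected number of fixed points of `F`, i.e. the expected number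
of `i ∈ S` with `F i = i`. -/
theorem cycle_prob_eq_expected_fixed_points
    (S : Finset ℕ) (hS : S.Nonempty) (hpos : ∀ i ∈ S, 0 < i)
    (π : ℕ → ℝ) (hπ0 : ∀ i ∈ S, 0 ≤ π i) (hπ1 : ∑ i ∈ S, π i = 1)
    (p : ℕ → ℝ) (hp : ∀ i ∈ S, 0 ≤ p i ∧ p i ≤ 1)
    {Ω : Type*} [MeasurableSpace Ω] (μ : Measure Ω) [IsProbabilityMeasure μ]
    (F : Ω → ℕ → ℕ)
    (hSmap : ∀ ω, ∀ i ∈ S, F ω i ∈ S ∨ F ω i = 0)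
    (hmeas : ∀ i ∈ S, Measurable fun ω => F ω i)
    (hindep : ProbabilityTheory.iIndepFun
      (fun (i : {i // i ∈ S}) ω => F ω i.val) μ)
    (hzero : ∀ i ∈ S, (μ {ω | F ω i = 0}).toReal = 1 - p i)
    (hval : ∀ i ∈ S, ∀ j ∈ S, (μ {ω | F ω i = j}).toReal = p i * π j) :
    (μ {ω | HasCycle S (F ω)}).toReal =
      ∫ ω, ((S.filter fun i => F ω i = i).card : ℝ) ∂μ :=
  cycle_prob_eq_expected_fixed_points_general S hpos π p μ F hSmap hmeas hindep hval
end
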